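/- Fix ε > 0, a leak factor τ_0 ∈ (0,1), an input sequence I : ℕ → ℝ, and an initial value V_0 ∈ ℝ. Define two sequences by V_ε(0) = V(0) = V_0, V_ε(t+1) = LSE_ε(V_ε(t) + log τ_0, I(t)) (two-term log-sum-exp), and V(t+1) = max(V(t) + log τ_0, I(t)). Then for every t ∈ ℕ, |V_ε(t) − V(t)| ≤ t · ε · log 2. -/
import Mathlib

lemma lse_bounds (ε a b : ℝ) (hε : 0 < ε) :
    max a b ≤ ε * Real.log (Real.exp (a / ε) + Real.exp (b / ε)) ∧
    ε * Real.log (Real.exp (a / ε) + Real.exp (b / ε)) ≤ max a b + ε * Real.log 2 := by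
  have hpa := Real.exp_pos (a / ε)
  have hpb := Real.exp_pos (b / ε)
  have hsum : 0 < Real.exp (a / ε) + Real.exp (b / ε) := by positivity
  constructor
  · have h1 : Real.exp (max a b / ε) ≤ Real.exp (a / ε) + Real.exp (b / ε) := by
      rcases max_cases a b with ⟨h, _⟩ | ⟨h, _⟩ <;> rw [h] <;> nlinarith
    have := Real.log_le_log (Real.exp_pos _) h1
    rw [Real.log_exp] at this
    have := (div_le_iff₀ hε).mp this
    linarith
  · have h1 : Real.exp (a / ε) + Real.exp (b / ε) ≤ 2 * Real.exp (max a b / ε) := by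
      have ha : a / ε ≤ max a b / ε := by gcongr; exact le_max_left a b
      have hb : b / ε ≤ max a b / ε := by gcongr; exact le_max_right a b
      nlinarith [Real.exp_le_exp.mpr ha, Real.exp_le_exp.mpr hb]
    have := Real.log_le_log hsum h1
    rw [Real.log_mul (by norm_num) (ne_of_gt (Real.exp_pos _)), Real.log_exp] at this
    have h2 : ε * Real.log (Real.exp (a / ε) + Real.exp (b / ε)) ≤ ε * (Real.log 2 + max a b / ε) := by
      exact mul_le_mul_of_nonneg_left this hε.le
    rw [mul_add, mul_div_cancel₀ _ hε.ne'] at h2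
    linarith

/-- For ε > 0, leak τ₀ ∈ (0,1), inputs I : ℕ → ℝ and initial value V₀,
let `Vε(t+1) = LSE_ε(Vε(t) + log τ₀, I(t))` (two-term log-sum-exp) and
`V(t+1) = max(V(t) + log τ₀, I(t))`, both started at V₀. Then
`|Vε(t) − V(t)| ≤ t·ε·log 2` for every t. -/
theorem ultraLIF_error_bound (ε τ₀ : ℝ) (hε : 0 < ε) (hτ : τ₀ ∈ Set.Ioo (0 : ℝ) 1)
    (I : ℕ → ℝ) (V₀ : ℝ) (Vε V : ℕ → ℝ)
    (hVε0 : Vε 0 = V₀) (hV0 : V 0 = V₀)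
    (hVε : ∀ t, Vε (t + 1) =
      ε * Real.log (Real.exp ((Vε t + Real.log τ₀) / ε) + Real.exp (I t / ε)))
    (hV : ∀ t, V (t + 1) = max (V t + Real.log τ₀) (I t)) :
    ∀ t : ℕ, |Vε t - V t| ≤ (t : ℝ) * ε * Real.log 2 := by
  intro t
  induction t with
  | zero => simp [hVε0, hV0]
  | succ t ih =>
    have hlog2 : (0:ℝ) ≤ Real.log 2 := Real.log_nonneg (by norm_num)
    obtain ⟨hlo, hhi⟩ := lse_bounds ε (Vε t + Real.log τ₀) (I t) hε
    have habs : |Vε (t+1) - max (Vε t + Real.log τ₀) (I t)| ≤ ε * Real.log 2 := by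
      rw [hVε t, abs_le]; constructor <;> linarith
    have hmax : |max (Vε t + Real.log τ₀) (I t) - max (V t + Real.log τ₀) (I t)| ≤
        |Vε t - V t| := by
      have := abs_max_sub_max_le_abs (Vε t + Real.log τ₀) (V t + Real.log τ₀) (I t)
      simpa using this
    calc |Vε (t+1) - V (t+1)|
        ≤ |Vε (t+1) - max (Vε t + Real.log τ₀) (I t)| +
          |max (Vε t + Real.log τ₀) (I t) - V (t+1)| := abs_sub_le _ _ _
      _ ≤ ε * Real.log 2 + |Vε t - V t| := by
          rw [hV t]; exact add_le_add habs hmax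
      _ ≤ ε * Real.log 2 + (t : ℝ) * ε * Real.log 2 := by linarith
      _ = ((t:ℕ)+1 : ℝ) * ε * Real.log 2 := by ring
      _ = ((t+1 : ℕ) : ℝ) * ε * Real.log 2 := by push_cast; ring
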